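/- For the reset-to-mod integrate-and-fire map with zero leakage and threshold ϑ, for all inputs a and perturbations ν: ‖IF_ϑ(a + ν) - IF_ϑ(a)‖_A ≤ ⌈‖ν‖_A / ϑ⌉ · ϑ. -/

import Mathlib

/-- Rounding toward zero to the grid `ϑ·ℤ`: `ϑ · sgn(v) · ⌊|v|/ϑ⌋`. -/
noncomputable def qmod (ϑ v : ℝ) : ℝ :=
  Real.sign v * ((⌊|v| / ϑ⌋ : ℤ) : ℝ) * ϑ

/-- Membrane potential `v_n` (before reset) of the discrete reset-to-mod
integrate-and-fire map: `u_0 = 0`, `v_n = u_{n-1} + a_n`, `u_n = v_n - qmod ϑ v_n`. -/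
noncomputable def IFv (ϑ : ℝ) (a : ℕ → ℝ) : ℕ → ℝ
  | 0 => a 0
  | n + 1 => (IFv ϑ a n - qmod ϑ (IFv ϑ a n)) + a (n + 1)

/-- Output spike amplitudes of the reset-to-mod integrate-and-fire map. -/
noncomputable def IFb (ϑ : ℝ) (a : ℕ → ℝ) (n : ℕ) : ℝ := qmod ϑ (IFv ϑ a n)

/-- The discrete Alexiewicz norm of the first `N` entries of a sequence. -/
noncomputable def Anorm (N : ℕ) (c : ℕ → ℝ) : ℝ :=
  ⨆ n : Fin N, |∑ i ∈ Finset.range (n.val + 1), c i|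

lemma qmod_zero (ϑ : ℝ) : qmod ϑ 0 = 0 := by simp [qmod]

lemma qmod_of_pos {ϑ v : ℝ} (h : 0 < v) : qmod ϑ v = ((⌊v / ϑ⌋ : ℤ) : ℝ) * ϑ := by
  rw [qmod, Real.sign_of_pos h, abs_of_pos h, one_mul]

lemma qmod_neg (ϑ v : ℝ) : qmod ϑ (-v) = - qmod ϑ v := by
  rw [qmod, qmod, Real.sign_neg, abs_neg]; ring

lemma qmod_nonneg {ϑ v : ℝ} (hϑ : 0 < ϑ) (hv : 0 ≤ v) : 0 ≤ qmod ϑ v := by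
  rcases eq_or_lt_of_le hv with h | h
  · rw [← h, qmod_zero]
  · rw [qmod_of_pos h]
    have h1 : (0:ℤ) ≤ ⌊v / ϑ⌋ := Int.floor_nonneg.mpr (by positivity)
    have : (0:ℝ) ≤ ((⌊v / ϑ⌋ : ℤ) : ℝ) := by exact_mod_cast h1
    exact mul_nonneg this hϑ.le

lemma resid_nonneg {ϑ v : ℝ} (hϑ : 0 < ϑ) (hv : 0 ≤ v) : 0 ≤ v - qmod ϑ v := by
  rcases eq_or_lt_of_le hv with h | h
  · rw [← h, qmod_zero]; simp
  · rw [qmod_of_pos h, sub_nonneg]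
    have h1 : ((⌊v / ϑ⌋ : ℤ) : ℝ) ≤ v / ϑ := Int.floor_le _
    calc ((⌊v / ϑ⌋ : ℤ) : ℝ) * ϑ ≤ (v / ϑ) * ϑ := by nlinarith
      _ = v := by field_simp

lemma resid_lt {ϑ v : ℝ} (hϑ : 0 < ϑ) (hv : 0 ≤ v) : v - qmod ϑ v < ϑ := by
  rcases eq_or_lt_of_le hv with h | h
  · rw [← h, qmod_zero]; simpa using hϑ
  · rw [qmod_of_pos h]
    have h1 : v / ϑ < ((⌊v / ϑ⌋ : ℤ) : ℝ) + 1 := Int.lt_floor_add_one _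
    have h2 : v < (((⌊v / ϑ⌋ : ℤ) : ℝ) + 1) * ϑ := by
      calc v = (v / ϑ) * ϑ := by field_simp
        _ < (((⌊v / ϑ⌋ : ℤ) : ℝ) + 1) * ϑ := by nlinarith
    linarith

lemma qmod_nonpos {ϑ v : ℝ} (hϑ : 0 < ϑ) (hv : v ≤ 0) : qmod ϑ v ≤ 0 := by
  have := qmod_nonneg hϑ (neg_nonneg.mpr hv)
  rw [qmod_neg] at this; linarith

lemma resid_nonpos {ϑ v : ℝ} (hϑ : 0 < ϑ) (hv : v ≤ 0) : v - qmod ϑ v ≤ 0 := by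
  have := resid_nonneg hϑ (neg_nonneg.mpr hv)
  rw [qmod_neg] at this; linarith

lemma neg_lt_resid {ϑ v : ℝ} (hϑ : 0 < ϑ) (hv : v ≤ 0) : -ϑ < v - qmod ϑ v := by
  have := resid_lt hϑ (neg_nonneg.mpr hv)
  rw [qmod_neg] at this; linarith

lemma qmod_int (ϑ v : ℝ) : ∃ m : ℤ, qmod ϑ v = (m : ℝ) * ϑ := by
  rcases lt_trichotomy v 0 with h | h | h
  · refine ⟨-⌊(-v) / ϑ⌋, ?_⟩
    have := qmod_of_pos (ϑ := ϑ) (neg_pos.mpr h)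
    rw [qmod_neg] at this
    push_cast
    linarith [this]
  · rw [h, qmod_zero]; exact ⟨0, by simp⟩
  · exact ⟨⌊v / ϑ⌋, qmod_of_pos h⟩

/-- Partial sums of outputs in terms of partial sums of inputs and the residual. -/
lemma sum_IFb (ϑ : ℝ) (a : ℕ → ℝ) (n : ℕ) :
    ∑ i ∈ Finset.range (n + 1), IFb ϑ a i
      = (∑ i ∈ Finset.range (n + 1), a i) - (IFv ϑ a n - qmod ϑ (IFv ϑ a n)) := by
  induction n with
  | zero => simp [IFb, IFv]
  | succ n ih =>
      rw [Finset.sum_range_succ, ih, Finset.sum_range_succ (f := a) (n := n + 1)]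
      have hv : IFv ϑ a (n + 1) = (IFv ϑ a n - qmod ϑ (IFv ϑ a n)) + a (n + 1) := rfl
      rw [IFb, hv]
      ring

/-- Single induction step: the signed bound. -/
lemma step_bound {ϑ x K v v' Vn Dp Dn : ℝ} (hϑ : 0 < ϑ)
    (hDn : Dn = Vn - ((v' - qmod ϑ v') - (v - qmod ϑ v)))
    (hw : v' - v = Vn - Dp)
    (hV : |Vn| ≤ x) (hDp : |Dp| ≤ K) (hxK : x ≤ K)
    (key : |Dn| < x + ϑ → |Dn| ≤ K) : |Dn| ≤ K := by
  rw [abs_le] at hV hDp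
  rcases le_total 0 v with h1 | h1 <;> rcases le_total 0 v' with h2 | h2
  · -- both nonneg: residuals in [0,ϑ)
    have r1 := resid_nonneg hϑ h1
    have r2 := resid_nonneg hϑ h2
    have r3 := resid_lt hϑ h1
    have r4 := resid_lt hϑ h2
    exact key (by rw [abs_lt]; constructor <;> linarith)
  · -- v ≥ 0 ≥ v'
    have r1 := resid_nonneg hϑ h1
    have r2 := resid_nonpos hϑ h2
    have q1 := qmod_nonneg hϑ h1
    have q2 := qmod_nonpos hϑ h2
    -- residual v ≤ v, residual v' ≥ v'
    rw [abs_le]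
    constructor <;> nlinarith
  · -- v ≤ 0 ≤ v'
    have r1 := resid_nonpos hϑ h1
    have r2 := resid_nonneg hϑ h2
    have q1 := qmod_nonpos hϑ h1
    have q2 := qmod_nonneg hϑ h2
    rw [abs_le]
    constructor <;> nlinarith
  · -- both nonpos
    have r1 := resid_nonpos hϑ h1
    have r2 := resid_nonpos hϑ h2
    have r3 := neg_lt_resid hϑ h1
    have r4 := neg_lt_resid hϑ h2
    exact key (by rw [abs_lt]; constructor <;> linarith)

/-- Lipschitz-style additive perturbation bound for
integrate-and-fire with zero leakage:
`‖IF_ϑ(a + ν) - IF_ϑ(a)‖_A ≤ ⌈‖ν‖_A / ϑ⌉ · ϑ`. -/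
theorem IF_lipschitz_bound (ϑ : ℝ) (hϑ : 0 < ϑ) (N : ℕ) (a ν : ℕ → ℝ) :
    Anorm N (fun n => IFb ϑ (fun i => a i + ν i) n - IFb ϑ a n)
      ≤ (⌈Anorm N ν / ϑ⌉ : ℝ) * ϑ := by
  set a' : ℕ → ℝ := fun i => a i + ν i with ha'
  set x : ℝ := Anorm N ν with hxdef
  set k : ℤ := ⌈x / ϑ⌉ with hkdef
  have hx0 : 0 ≤ x := Real.iSup_nonneg fun n => abs_nonneg _
  have hk0 : (0:ℝ) ≤ (k : ℝ) := by
    exact_mod_cast Int.ceil_nonneg (div_nonneg hx0 hϑ.le)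
  have hxk : x ≤ (k : ℝ) * ϑ := by
    have h := Int.le_ceil (x / ϑ)
    rw [div_le_iff₀ hϑ] at h
    exact h
  set V : ℕ → ℝ := fun n => ∑ i ∈ Finset.range (n + 1), ν i with hVdef
  set D : ℕ → ℝ := fun n => ∑ i ∈ Finset.range (n + 1), (IFb ϑ a' i - IFb ϑ a i) with hDdef
  have hD : ∀ n, D n = V n -
      ((IFv ϑ a' n - qmod ϑ (IFv ϑ a' n)) - (IFv ϑ a n - qmod ϑ (IFv ϑ a n))) := by
    intro n
    have h1 := sum_IFb ϑ a' n
    have h2 := sum_IFb ϑ a n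
    have h3 : D n = (∑ i ∈ Finset.range (n + 1), IFb ϑ a' i)
        - ∑ i ∈ Finset.range (n + 1), IFb ϑ a i := by
      rw [hDdef]; exact Finset.sum_sub_distrib _ _
    have h4 : ∑ i ∈ Finset.range (n + 1), a' i
        = (∑ i ∈ Finset.range (n + 1), a i) + V n := by
      rw [ha', hVdef]; exact Finset.sum_add_distrib
    rw [h3, h1, h2, h4]; ring
  have hint : ∀ n, ∃ m : ℤ, D n = (m : ℝ) * ϑ := by
    intro n
    induction n with
    | zero =>
        obtain ⟨m1, hm1⟩ := qmod_int ϑ (IFv ϑ a' 0)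
        obtain ⟨m2, hm2⟩ := qmod_int ϑ (IFv ϑ a 0)
        refine ⟨m1 - m2, ?_⟩
        have h0 : D 0 = IFb ϑ a' 0 - IFb ϑ a 0 := by
          rw [hDdef]; simp
        rw [h0, IFb, IFb, hm1, hm2]
        push_cast; ring
    | succ n ih =>
        obtain ⟨m, hm⟩ := ih
        obtain ⟨m1, hm1⟩ := qmod_int ϑ (IFv ϑ a' (n + 1))
        obtain ⟨m2, hm2⟩ := qmod_int ϑ (IFv ϑ a (n + 1))
        refine ⟨m + (m1 - m2), ?_⟩
        have : D (n + 1) = D n + (IFb ϑ a' (n + 1) - IFb ϑ a (n + 1)) := by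
          rw [hDdef]; exact Finset.sum_range_succ _ _
        rw [this, hm, IFb, IFb, hm1, hm2]
        push_cast; ring
  have hVle : ∀ n, n < N → |V n| ≤ x := by
    intro n hn
    rw [hxdef]
    exact le_ciSup (Finite.bddAbove_range
      (fun m : Fin N => |∑ i ∈ Finset.range (m.val + 1), ν i|)) (⟨n, hn⟩ : Fin N)
  have key : ∀ n, |D n| < x + ϑ → |D n| ≤ (k : ℝ) * ϑ := by
    intro n h
    obtain ⟨m, hm⟩ := hint n
    rw [hm] at h ⊢
    have habs : |(m : ℝ) * ϑ| = |(m : ℝ)| * ϑ := by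
      rw [abs_mul, abs_of_pos hϑ]
    rw [habs] at h ⊢
    have h1 : |(m : ℝ)| * ϑ < ((k : ℝ) + 1) * ϑ := by nlinarith
    have h2 : |(m : ℝ)| < (k : ℝ) + 1 := by
      exact lt_of_mul_lt_mul_right (by linarith) hϑ.le
    have h3 : |m| < k + 1 := by exact_mod_cast (by push_cast; exact h2 : (|m| : ℝ) < (k : ℝ) + 1)
    have h4 : |m| ≤ k := by omega
    have h5 : (|m| : ℝ) ≤ (k : ℝ) := by exact_mod_cast h4
    have : |(m : ℝ)| = ((|m| : ℤ) : ℝ) := by push_cast; ring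
    rw [this]
    nlinarith
  have main : ∀ n, n < N → |D n| ≤ (k : ℝ) * ϑ := by
    intro n
    induction n with
    | zero =>
        intro hN
        refine step_bound (v := IFv ϑ a 0) (v' := IFv ϑ a' 0) (Vn := V 0) (Dp := 0)
          hϑ (hD 0) ?_ (hVle 0 hN) (by simpa using mul_nonneg hk0 hϑ.le) hxk (key 0)
        show IFv ϑ a' 0 - IFv ϑ a 0 = V 0 - 0
        simp [IFv, hVdef, ha']
    | succ n ih =>
        intro hN
        have hn : n < N := Nat.lt_of_succ_lt hN
        refine step_bound (v := IFv ϑ a (n + 1)) (v' := IFv ϑ a' (n + 1)) (Vn := V (n + 1))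
          (Dp := D n) hϑ (hD (n + 1)) ?_ (hVle (n + 1) hN) (ih hn) hxk (key (n + 1))
        have h1 : IFv ϑ a' (n + 1)
            = (IFv ϑ a' n - qmod ϑ (IFv ϑ a' n)) + a' (n + 1) := rfl
        have h2 : IFv ϑ a (n + 1)
            = (IFv ϑ a n - qmod ϑ (IFv ϑ a n)) + a (n + 1) := rfl
        have h3 := hD n
        have h4 : V (n + 1) = V n + ν (n + 1) := by
          rw [hVdef]; exact Finset.sum_range_succ _ _
        have h5 : a' (n + 1) = a (n + 1) + ν (n + 1) := rfl
        rw [h1, h2, h4, h5]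
        linarith
  rw [Anorm]
  exact Real.iSup_le (fun n => main n.val n.isLt) (mul_nonneg hk0 hϑ.le)
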